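/- arXiv:1811.11392 — 2 statements merged into one kernel-verified Lean document; each statement's English description precedes it below -/
import Mathlib

section
/- For the sphere f(u,v) = (sin u cos v, cos u cos v, sin v) in R³₁, the lightlike point set {(u,v) : λ(u,v) = 0, |v| < π/2} equals {(u,v) : v = π/4 or v = −π/4}, and at every such point the differential dλ is nonzero (every lightlike point is non-degenerate). -/
noncomputable section

def mdot (x y : Fin 3 → ℝ) : ℝ := x 0 * y 0 + x 1 * y 1 - x 2 * y 2

def sphere3 (u v : ℝ) : Fin 3 → ℝ :=
  ![Real.sin u * Real.cos v, Real.cos u * Real.cos v, Real.sin v]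

def sphere3u (u v : ℝ) : Fin 3 → ℝ := deriv (fun t => sphere3 t v) u

def sphere3v (u v : ℝ) : Fin 3 → ℝ := deriv (fun t => sphere3 u t) v

/-- The discriminant function of the sphere in `R³₁`. -/
def sphereLam (p : ℝ × ℝ) : ℝ :=
  mdot (sphere3u p.1 p.2) (sphere3u p.1 p.2) *
      mdot (sphere3v p.1 p.2) (sphere3v p.1 p.2) -
    mdot (sphere3u p.1 p.2) (sphere3v p.1 p.2) ^ 2

/-! The discriminant depends on `v` alone, `λ(u, v) = -cos² v · cos 2v`. On `|v| < π/2` the factor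
`cos² v` is positive, so `λ = 0` exactly where `cos 2v = 0`, i.e. `v = ±π/4`; there
`∂λ/∂v = 2 cos² v · sin 2v = ±2 cos² v ≠ 0`. -/

lemma fderiv_comp_snd_ne_zero {𝕜 E F : Type*} [NontriviallyNormedField 𝕜]
    [NormedAddCommGroup E] [NormedSpace 𝕜 E] [NormedAddCommGroup F] [NormedSpace 𝕜 F]
    {g : 𝕜 → F} {g' : F} {p : E × 𝕜} (hg : HasDerivAt g g' p.2) (hg' : g' ≠ 0) :
    fderiv 𝕜 (fun q : E × 𝕜 => g q.2) p ≠ 0 := by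
  show fderiv 𝕜 (g ∘ Prod.snd) p ≠ 0
  rw [(hg.hasFDerivAt.comp p hasFDerivAt_snd).fderiv]
  intro h
  apply hg'
  simpa using DFunLike.congr_fun h (0, 1)

open Real

lemma sphere3u_eq (u v : ℝ) : sphere3u u v = ![cos u * cos v, -sin u * cos v, 0] := by
  refine HasDerivAt.deriv (hasDerivAt_pi.2 fun i => ?_)
  fin_cases i
  · simpa [sphere3] using (hasDerivAt_sin u).mul_const (cos v)
  · simpa [sphere3] using (hasDerivAt_cos u).mul_const (cos v)
  · simpa [sphere3] using hasDerivAt_const u (sin v)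

lemma sphere3v_eq (u v : ℝ) :
    sphere3v u v = ![-(sin u * sin v), -(cos u * sin v), cos v] := by
  refine HasDerivAt.deriv (hasDerivAt_pi.2 fun i => ?_)
  fin_cases i
  · simpa [sphere3] using (hasDerivAt_cos v).const_mul (sin u)
  · simpa [sphere3] using (hasDerivAt_cos v).const_mul (cos u)
  · simpa [sphere3] using hasDerivAt_sin v

lemma sphereLam_eq (p : ℝ × ℝ) : sphereLam p = -(cos p.2 ^ 2 * cos (2 * p.2)) := by
  simp only [sphereLam, mdot, sphere3u_eq, sphere3v_eq, cos_two_mul, Matrix.cons_val_zero,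
    Matrix.cons_val_one, Matrix.cons_val, neg_mul, mul_neg, neg_neg, mul_zero, zero_mul, sub_zero]
  linear_combination cos p.2 ^ 2 * (sin p.2 ^ 2 * (sin p.1 ^ 2 + cos p.1 ^ 2 + 1) - cos p.2 ^ 2) *
    sin_sq_add_cos_sq p.1 + cos p.2 ^ 2 * sin_sq_add_cos_sq p.2

lemma hasDerivAt_neg_cos_sq_mul_cos_two_mul (v : ℝ) :
    HasDerivAt (fun t => -(cos t ^ 2 * cos (2 * t)))
      (2 * cos v * sin v * cos (2 * v) + 2 * cos v ^ 2 * sin (2 * v)) v := by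
  have h : HasDerivAt (fun t => -(cos t ^ 2 * cos (2 * t))) _ v :=
    (((hasDerivAt_cos v).fun_pow 2).fun_mul ((hasDerivAt_id' v).const_mul 2).cos).fun_neg
  convert h using 1
  ring

lemma cos_two_mul_eq_zero_iff_of_abs_lt {v : ℝ} (hv : |v| < π / 2) :
    cos (2 * v) = 0 ↔ v = π / 4 ∨ v = -(π / 4) := by
  constructor
  · intro h
    have h2v : 2 * |v| = π / 2 := by
      refine injOn_cos ⟨by positivity, by linarith⟩ ⟨by positivity, by linarith [pi_pos]⟩ ?_
      rw [cos_pi_div_two, ← abs_two, ← abs_mul, cos_abs, h]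
    exact (abs_eq (by positivity)).1 (by linarith)
  · rintro (rfl | rfl) <;> simp [show 2 * (π / 4) = π / 2 by ring]

lemma cos_two_mul_eq_zero_of_sphereLam_eq_zero {p : ℝ × ℝ} (h : sphereLam p = 0)
    (hv : |p.2| < π / 2) : cos (2 * p.2) = 0 := by
  have hcos : cos p.2 ≠ 0 := (cos_pos_of_mem_Ioo (abs_lt.1 hv)).ne'
  rw [sphereLam_eq, neg_eq_zero] at h
  exact (mul_eq_zero.1 h).resolve_left (pow_ne_zero 2 hcos)

theorem sphere_lightlike_set_nondegenerate :
    {p : ℝ × ℝ | sphereLam p = 0 ∧ |p.2| < Real.pi / 2} =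
      {p : ℝ × ℝ | p.2 = Real.pi / 4 ∨ p.2 = -(Real.pi / 4)} ∧
    ∀ p : ℝ × ℝ, sphereLam p = 0 → |p.2| < Real.pi / 2 →
      fderiv ℝ sphereLam p ≠ 0 := by
  refine ⟨Set.ext fun p => ⟨fun ⟨h, hv⟩ => ?_, fun hp => ?_⟩, fun p h hv => ?_⟩
  · exact (cos_two_mul_eq_zero_iff_of_abs_lt hv).1 (cos_two_mul_eq_zero_of_sphereLam_eq_zero h hv)
  · have hv : |p.2| < π / 2 := by
      rcases hp with hp | hp <;> rw [hp, abs_lt] <;> constructor <;> linarith [pi_pos]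
    rw [Set.mem_ofPred_eq, sphereLam_eq, (cos_two_mul_eq_zero_iff_of_abs_lt hv).2 hp]
    exact ⟨by ring, hv⟩
  · have hcos : cos p.2 ≠ 0 := (cos_pos_of_mem_Ioo (abs_lt.1 hv)).ne'
    have hcos2 := cos_two_mul_eq_zero_of_sphereLam_eq_zero h hv
    have hsin2 : sin (2 * p.2) ≠ 0 := fun h0 => by simpa [h0, hcos2] using sin_sq_add_cos_sq (2 * p.2)
    rw [show sphereLam = fun q => -(cos q.2 ^ 2 * cos (2 * q.2)) from funext sphereLam_eq]
    refine fderiv_comp_snd_ne_zero (hasDerivAt_neg_cos_sq_mul_cos_two_mul p.2) ?_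
    rw [hcos2, mul_zero, zero_add]
    positivity

end
end

section
/- Let E, G : ℝ → ℝ be smooth with G > 0, and ε : ℝ → ℝ smooth with ε(0) = 0. Suppose E(u) = ε(u)²G(u) for all u. If additionally E_v(0) ≠ 0 for a given smooth function E_v (playing the role of a transversal derivative), then the quantity κ(u) := −(E_v(u) + ε(u)G_u(u)) / (2 ε(u)^{4/3} G(u) ρ(u)^{1/3}), where ρ(u) = E_v(u) + 2ε(u)F_v(u) + ε(u)²G_v(u) for smooth F_v, G_v, satisfies: ε(u)^{4/3}·κ(u) → −E_v(0)^{2/3}/(2G(0)) as u → 0 through points where ε(u) ≠ 0. In particular, if E_v(0) > 0, then κ(u) → −∞ along any sequence uₙ → 0 with ε(uₙ) > 0. -/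
open Filter Topology

/-- The real cube root. -/
noncomputable def cbrt (x : ℝ) : ℝ :=
  if 0 ≤ x then x ^ ((1:ℝ)/3) else -((-x) ^ ((1:ℝ)/3))

lemma cbrt_cube (x : ℝ) : cbrt x ^ 3 = x := by
  unfold cbrt
  split_ifs with h
  · rw [← Real.rpow_natCast (x ^ ((1:ℝ)/3)) 3, ← Real.rpow_mul h]
    norm_num
  · push_neg at h
    have h' : (0:ℝ) ≤ -x := by linarith
    rw [neg_pow]
    rw [← Real.rpow_natCast ((-x) ^ ((1:ℝ)/3)) 3, ← Real.rpow_mul h']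
    norm_num

lemma cbrt_zero : cbrt 0 = 0 := by
  unfold cbrt
  simp [Real.zero_rpow (by norm_num : (1:ℝ)/3 ≠ 0)]

lemma cbrt_ne_zero {x : ℝ} (hx : x ≠ 0) : cbrt x ≠ 0 := by
  intro h
  apply hx
  rw [← cbrt_cube x, h]
  ring

lemma cbrt_pos {x : ℝ} (hx : 0 < x) : 0 < cbrt x := by
  unfold cbrt
  rw [if_pos hx.le]
  exact Real.rpow_pos_of_pos hx _

lemma continuous_cbrt : Continuous cbrt := by
  have h1 : Continuous fun x : ℝ => x ^ ((1:ℝ)/3) := by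
    apply continuous_iff_continuousAt.2
    intro x
    exact Real.continuousAt_rpow_const x _ (Or.inr (by norm_num))
  have h2 : Continuous fun x : ℝ => -((-x) ^ ((1:ℝ)/3)) :=
    (h1.comp continuous_neg).neg
  unfold cbrt
  apply Continuous.if_le h1 h2 continuous_const continuous_id
  intro x hx
  have hx0 : x = 0 := hx.symm
  subst hx0
  simp [Real.zero_rpow (by norm_num : (1:ℝ)/3 ≠ 0)]

/-- The lightlike singular curvature diverges to `-∞` at a lightlike point of
the admissible second kind. -/
theorem kappaL_diverges (E G ε Ev Fv Gv : ℝ → ℝ)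
    (hE : ContDiff ℝ (⊤ : ℕ∞) E) (hG : ContDiff ℝ (⊤ : ℕ∞) G) (hε : ContDiff ℝ (⊤ : ℕ∞) ε)
    (hEv : ContDiff ℝ (⊤ : ℕ∞) Ev) (hFv : ContDiff ℝ (⊤ : ℕ∞) Fv) (hGv : ContDiff ℝ (⊤ : ℕ∞) Gv)
    (hGpos : ∀ u, 0 < G u) (hε0 : ε 0 = 0)
    (hEG : ∀ u, E u = ε u ^ 2 * G u) (hEv0 : Ev 0 ≠ 0)
    (ρ κ : ℝ → ℝ)
    (hρ : ρ = fun u => Ev u + 2 * ε u * Fv u + ε u ^ 2 * Gv u)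
    (hκ : κ = fun u =>
      -(Ev u + ε u * deriv G u) / (2 * (cbrt (ε u)) ^ 4 * G u * cbrt (ρ u))) :
    Tendsto (fun u => (cbrt (ε u)) ^ 4 * κ u)
        (𝓝[{u : ℝ | ε u ≠ 0}] 0) (𝓝 (-(cbrt (Ev 0)) ^ 2 / (2 * G 0))) ∧
    (Ev 0 > 0 → ∀ s : ℕ → ℝ, Tendsto s atTop (𝓝 0) → (∀ n, 0 < ε (s n)) →
      Tendsto (fun n => κ (s n)) atTop atBot) := by
  set f : ℝ → ℝ := fun u => -(Ev u + ε u * deriv G u) / (2 * G u * cbrt (ρ u)) with hf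
  have hρ0 : ρ 0 = Ev 0 := by simp [hρ, hε0]
  have hρcont : Continuous ρ := by
    rw [hρ]
    exact hEv.continuous.add ((continuous_const.mul
      hε.continuous).mul hFv.continuous) |>.add
      ((hε.continuous.pow 2).mul hGv.continuous)
  have hcf : ContinuousAt f 0 := by
    apply ContinuousAt.div
    · exact (hEv.continuous.add (hε.continuous.mul
        (hG.continuous_deriv (by simp)))).neg.continuousAt
    · exact ((continuous_const.mul hG.continuous).mul
        (continuous_cbrt.comp hρcont)).continuousAt
    · rw [hρ0]
      exact mul_ne_zero (mul_ne_zero two_ne_zero (hGpos 0).ne') (cbrt_ne_zero hEv0)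
  have hcE : cbrt (Ev 0) ≠ 0 := cbrt_ne_zero hEv0
  have hf0 : f 0 = -(cbrt (Ev 0)) ^ 2 / (2 * G 0) := by
    have hG0 : G 0 ≠ 0 := (hGpos 0).ne'
    have hcube : cbrt (Ev 0) ^ 3 = Ev 0 := cbrt_cube _
    have hd1 : (2 * G 0 * cbrt (Ev 0)) ≠ 0 :=
      mul_ne_zero (mul_ne_zero two_ne_zero hG0) hcE
    have hd2 : (2 * G 0) ≠ 0 := mul_ne_zero two_ne_zero hG0
    simp only [hf, hε0, hρ0, zero_mul, add_zero]
    rw [div_eq_div_iff hd1 hd2]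
    linear_combination (2 * G 0) * hcube
  constructor
  · have hkey : ∀ u ∈ {u : ℝ | ε u ≠ 0}, (cbrt (ε u)) ^ 4 * κ u = f u := by
      intro u hu
      have hc : cbrt (ε u) ≠ 0 := cbrt_ne_zero hu
      rw [hκ]
      simp only [hf]
      by_cases hr : cbrt (ρ u) = 0
      · simp [hr]
      · have hG0 : G u ≠ 0 := (hGpos u).ne'
        field_simp
    have := (hcf.tendsto.mono_left (nhdsWithin_le_nhds
      (s := {u : ℝ | ε u ≠ 0}))).congr'
      (eventually_mem_nhdsWithin.mono fun u hu => (hkey u hu).symm)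
    rwa [hf0] at this
  · intro hEvpos s hs hεs
    have hcEpos : 0 < cbrt (Ev 0) := cbrt_pos hEvpos
    have hL : -(cbrt (Ev 0)) ^ 2 / (2 * G 0) < 0 := by
      apply div_neg_of_neg_of_pos
      · nlinarith
      · linarith [hGpos 0]
    have hfs : Tendsto (fun n => f (s n)) atTop (𝓝 (-(cbrt (Ev 0)) ^ 2 / (2 * G 0))) := by
      rw [← hf0]
      exact hcf.tendsto.comp hs
    have hcs : Tendsto (fun n => (cbrt (ε (s n))) ^ 4) atTop (𝓝[>] (0:ℝ)) := by
      rw [tendsto_nhdsWithin_iff]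
      constructor
      · have : Tendsto (fun n => cbrt (ε (s n))) atTop (𝓝 (cbrt (ε 0))) :=
          ((continuous_cbrt.comp hε.continuous).tendsto 0).comp hs
        rw [hε0, cbrt_zero] at this
        simpa using this.pow 4
      · exact Eventually.of_forall fun n => pow_pos (cbrt_pos (hεs n)) 4
    have hinv : Tendsto (fun n => ((cbrt (ε (s n))) ^ 4)⁻¹) atTop atTop :=
      tendsto_inv_nhdsGT_zero.comp hcs
    have hκeq : ∀ n, κ (s n) = f (s n) * ((cbrt (ε (s n))) ^ 4)⁻¹ := by
      intro n
      rw [hκ]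
      simp only [hf]
      rw [← div_eq_mul_inv, div_div]
      congr 1
      ring
    have := Tendsto.neg_mul_atTop hL hfs hinv
    exact this.congr fun n => (hκeq n).symm
end
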